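/- Let ρ_ε, V_ε solve (in the sense of distributions on (0,T)×Ω, Ω = ℝ²×𝕋¹) the wave system ε∂_t ρ_ε + div V_ε = 0 and ε∂_t V_ε + ∇ρ_ε + e₃×V_ε = ε f_ε + ε^{2(1−n)} g_ε, with all functions smooth. Define the vertically averaged quantity γ̃_ε := curl_h⟨V_ε^h⟩ − ⟨ρ_ε⟩, where ⟨·⟩ denotes average in x₃ and curl_h v = ∂₁v² − ∂₂v¹. Assume curl_h⟨g_ε^h⟩ = 0. Then ∂_t γ̃_ε = curl_h⟨f_ε^h⟩. -/

import Mathlib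

/-- Partial derivative in direction `i` on ℝ³. -/
noncomputable def pd3 (i : Fin 3) (f : (Fin 3 → ℝ) → ℝ) (x : Fin 3 → ℝ) : ℝ :=
  fderiv ℝ f x (Pi.single i 1)

/-- Partial derivative in direction `i` on ℝ². -/
noncomputable def pd2 (i : Fin 2) (f : (Fin 2 → ℝ) → ℝ) (y : Fin 2 → ℝ) : ℝ :=
  fderiv ℝ f y (Pi.single i 1)

/-- Vertical average over 𝕋¹ (period 1 in the third variable). -/
noncomputable def vavg (h : (Fin 3 → ℝ) → ℝ) (y : Fin 2 → ℝ) : ℝ :=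
  ∫ s in (0:ℝ)..1, h ![y 0, y 1, s]

open MeasureTheory intervalIntegral Metric ContinuousLinearMap

/-- The embedding derivative `(Fin 2 → ℝ) →L[ℝ] (Fin 3 → ℝ)`. -/
noncomputable def ℓe : (Fin 2 → ℝ) →L[ℝ] (Fin 3 → ℝ) :=
  ContinuousLinearMap.pi ![ContinuousLinearMap.proj 0, ContinuousLinearMap.proj 1, 0]

lemma ℓe_apply (v : Fin 2 → ℝ) : ℓe v = ![v 0, v 1, 0] := by
  funext i
  fin_cases i <;> simp [ℓe]

lemma ℓe_single0 : ℓe (Pi.single (0 : Fin 2) 1) = Pi.single (0 : Fin 3) 1 := by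
  rw [ℓe_apply]; funext i; fin_cases i <;> simp [Pi.single_apply]

lemma ℓe_single1 : ℓe (Pi.single (1 : Fin 2) 1) = Pi.single (1 : Fin 3) 1 := by
  rw [ℓe_apply]; funext i; fin_cases i <;> simp [Pi.single_apply]

lemma hasFDerivAt_embed (s : ℝ) (y : Fin 2 → ℝ) :
    HasFDerivAt (fun y : Fin 2 → ℝ => (![y 0, y 1, s] : Fin 3 → ℝ)) ℓe y := by
  have h := (ℓe.hasFDerivAt (x := y)).add_const (![0, 0, s] : Fin 3 → ℝ)
  refine h.congr_of_eventuallyEq (Filter.Eventually.of_forall fun z => ?_)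
  funext i
  fin_cases i <;> simp [ℓe_apply]

lemma contDiff_embed : ContDiff ℝ (⊤ : ℕ∞)
    (fun p : (Fin 2 → ℝ) × ℝ => (![p.1 0, p.1 1, p.2] : Fin 3 → ℝ)) := by
  apply contDiff_pi.2
  intro i
  fin_cases i <;> simp
  · exact (contDiff_apply ℝ ℝ 0).comp contDiff_fst
  · exact (contDiff_apply ℝ ℝ 1).comp contDiff_fst
  · exact contDiff_snd

open MeasureTheory intervalIntegral Metric

variable {E : Type*} [NormedAddCommGroup E] [NormedSpace ℝ E] [FiniteDimensional ℝ E]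

/-- Joint smoothness of the partial Fréchet derivative in the first variable. -/
lemma contDiff_pfderiv (G : E × ℝ → ℝ) (hG : ContDiff ℝ (⊤ : ℕ∞) G) :
    ContDiff ℝ (⊤ : ℕ∞) (fun p : E × ℝ => fderiv ℝ (fun z => G (z, p.2)) p.1) :=
  ContDiff.fderiv (𝕜 := ℝ) (f := fun (p : E × ℝ) (z : E) => G (z, p.2))
    (g := fun p : E × ℝ => p.1) (m := (⊤ : ℕ∞)) (n := (⊤ : ℕ∞))
    (hG.comp (contDiff_snd.prodMk (contDiff_snd.comp contDiff_fst))) contDiff_fst (by simp)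

/-- Differentiation under the interval integral for smooth integrands. -/
lemma paramFDeriv (G : E × ℝ → ℝ) (hG : ContDiff ℝ (⊤ : ℕ∞) G) (z₀ : E) :
    HasFDerivAt (fun z => ∫ s in (0:ℝ)..1, G (z, s))
      (∫ s in (0:ℝ)..1, fderiv ℝ (fun z => G (z, s)) z₀) z₀ := by
  have hD := contDiff_pfderiv G hG
  have hDc : Continuous (fun p : E × ℝ => fderiv ℝ (fun z => G (z, p.2)) p.1) := hD.continuous
  obtain ⟨C, hC⟩ : ∃ C, ∀ p ∈ (closedBall z₀ 1) ×ˢ (Set.uIcc (0:ℝ) 1),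
      ‖fderiv ℝ (fun z => G (z, p.2)) p.1‖ ≤ C :=
    ((isCompact_closedBall _ _).prod isCompact_uIcc).exists_bound_of_continuousOn
      hDc.continuousOn
  have hdiffz : ∀ (s : ℝ) (z : E), DifferentiableAt ℝ (fun z => G (z, s)) z := fun s z =>
    (hG.differentiable (by simp)).comp (differentiable_id.prodMk (differentiable_const s)) z
  exact intervalIntegral.hasFDerivAt_integral_of_dominated_of_fderiv_le
    (𝕜 := ℝ) (μ := volume) (a := (0:ℝ)) (b := 1)
    (F := fun z s => G (z, s))
    (F' := fun z s => fderiv ℝ (fun z => G (z, s)) z)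
    (x₀ := z₀) (bound := fun _ => C) (s := ball z₀ 1) (ball_mem_nhds z₀ one_pos)
    (Filter.Eventually.of_forall fun z =>
      ((hG.continuous.comp (Continuous.prodMk_right z)).aestronglyMeasurable))
    ((hG.continuous.comp (Continuous.prodMk_right z₀)).intervalIntegrable 0 1)
    ((hDc.comp (continuous_const.prodMk continuous_id)).aestronglyMeasurable)
    (Filter.Eventually.of_forall fun s hs z hz =>
      hC (z, s) ⟨ball_subset_closedBall hz, Set.Ioc_subset_Icc_self hs⟩)
    intervalIntegrable_const
    (Filter.Eventually.of_forall fun s _ z _ => (hdiffz s z).hasFDerivAt)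

lemma intervalIntegral_clm_apply {F' : ℝ → E →L[ℝ] ℝ} (h : Continuous F') (v : E) :
    (∫ s in (0:ℝ)..1, F' s) v = ∫ s in (0:ℝ)..1, F' s v := by
  rw [intervalIntegral.integral_of_le zero_le_one,
    intervalIntegral.integral_of_le zero_le_one]
  exact ContinuousLinearMap.integral_apply h.integrableOn_Ioc v

/-- Scalar-parameter differentiation under the interval integral. -/
lemma paramDeriv (G : ℝ × ℝ → ℝ) (hG : ContDiff ℝ (⊤ : ℕ∞) G) (t₀ : ℝ) :
    HasDerivAt (fun t => ∫ s in (0:ℝ)..1, G (t, s))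
      (∫ s in (0:ℝ)..1, deriv (fun t => G (t, s)) t₀) t₀ := by
  have h := (paramFDeriv G hG t₀).hasDerivAt
  have hD : Continuous (fun s : ℝ => fderiv ℝ (fun t => G (t, s)) t₀) := by
    exact (contDiff_pfderiv G hG).continuous.comp (continuous_const.prodMk continuous_id)
  rw [intervalIntegral_clm_apply hD 1] at h
  exact h

/-- Commuting a time derivative with a directional space derivative (Clairaut). -/
lemma mixed_swap (u : ℝ × E → ℝ) (hu : ContDiff ℝ (⊤ : ℕ∞) u) (t : ℝ) (x v : E) :
    deriv (fun τ => fderiv ℝ (fun ξ => u (τ, ξ)) x v) t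
      = fderiv ℝ (fun ξ => deriv (fun τ => u (τ, ξ)) t) x v := by
  have hud : Differentiable ℝ u := hu.differentiable (by simp)
  set D := fderiv ℝ u with hD
  have hDd : Differentiable ℝ D := (hu.fderiv_right (m := (⊤ : ℕ∞)) (by simp)).differentiable (by simp)
  set A := fderiv ℝ D (t, x) with hA
  have hsym : ∀ p q, A p q = A q p :=
    second_derivative_symmetric (fun y => (hud y).hasFDerivAt) ((hDd _).hasFDerivAt)
  have h1 : ∀ τ (ξ : E), fderiv ℝ (fun ξ => u (τ, ξ)) ξ = (D (τ, ξ)).comp (inr ℝ ℝ E) :=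
    fun τ ξ => ((hud _).hasFDerivAt.comp ξ (hasFDerivAt_prodMk_right τ ξ)).fderiv
  have h2 : ∀ (ξ : E) τ, deriv (fun τ => u (τ, ξ)) τ = D (τ, ξ) (1, 0) := by
    intro ξ τ
    have h := ((hud _).hasFDerivAt.comp τ (hasFDerivAt_prodMk_left τ ξ)).hasDerivAt
    simpa [Function.comp_def] using h.deriv
  -- LHS
  have hDl : HasDerivAt (fun τ : ℝ => D (τ, x)) (A ((1:ℝ), (0:E))) t := by
    have h := ((hDd _).hasFDerivAt.comp t (hasFDerivAt_prodMk_left t x)).hasDerivAt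
    simpa [Function.comp_def] using h
  have hL : HasDerivAt (fun τ : ℝ => D (τ, x) ((0:ℝ), v)) (A ((1:ℝ), (0:E)) ((0:ℝ), v)) t := by
    have h := hDl.clm_apply (hasDerivAt_const t (((0:ℝ), v) : ℝ × E))
    simpa using h
  have hLe : (fun τ => fderiv ℝ (fun ξ => u (τ, ξ)) x v) =
      fun τ => D (τ, x) ((0:ℝ), v) := by
    funext τ; rw [h1]; simp
  -- RHS
  have hR : HasFDerivAt (fun ξ : E => D (t, ξ) ((1:ℝ), (0:E)))
      (((D (t, x)).comp (0 : E →L[ℝ] ℝ × E)) + (A.comp (inr ℝ ℝ E)).flip ((1:ℝ), (0:E))) x :=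
    ((hDd _).hasFDerivAt.comp x (hasFDerivAt_prodMk_right t x)).clm_apply
      (hasFDerivAt_const (((1:ℝ), (0:E)) : ℝ × E) x)
  have hRe : (fun ξ => deriv (fun τ => u (τ, ξ)) t) =
      fun ξ : E => D (t, ξ) ((1:ℝ), (0:E)) := by
    funext ξ; rw [h2]
  rw [hLe, hL.deriv, hRe, hR.fderiv]
  simp only [add_apply, comp_apply, zero_apply, map_zero, flip_apply, inr_apply, zero_add]
  exact hsym _ _

/-- Symmetry of second spatial derivatives. -/
lemma pd_swap (h : E → ℝ) (hh : ContDiff ℝ (⊤ : ℕ∞) h) (x v w : E) :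
    fderiv ℝ (fun z => fderiv ℝ h z w) x v = fderiv ℝ (fun z => fderiv ℝ h z v) x w := by
  have hud : Differentiable ℝ h := hh.differentiable (by simp)
  have hDd : Differentiable ℝ (fderiv ℝ h) := (hh.fderiv_right (m := (⊤ : ℕ∞)) (by simp)).differentiable (by simp)
  set B := fderiv ℝ (fderiv ℝ h) x with hB
  have hsym : ∀ p q, B p q = B q p :=
    second_derivative_symmetric (fun y => (hud y).hasFDerivAt) ((hDd _).hasFDerivAt)
  have key : ∀ a : E, fderiv ℝ (fun z => fderiv ℝ h z a) x = (fderiv ℝ h x).comp (0 : E →L[ℝ] E) + B.flip a := by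
    intro a
    exact ((hDd _).hasFDerivAt.clm_apply (hasFDerivAt_const a x)).fderiv
  rw [key, key]
  simp only [add_apply, comp_apply, zero_apply, map_zero, flip_apply, zero_add]
  exact hsym _ _



/-- `pd2` of a vertical average equals the vertical average of `pd3`. -/
lemma pd2_vavg (h : (Fin 3 → ℝ) → ℝ) (hh : ContDiff ℝ (⊤ : ℕ∞) h) (i : Fin 2) (j : Fin 3)
    (hij : ℓe (Pi.single i 1) = Pi.single j 1) (y : Fin 2 → ℝ) :
    pd2 i (vavg h) y = ∫ s in (0:ℝ)..1, pd3 j h ![y 0, y 1, s] := by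
  have hG : ContDiff ℝ (⊤ : ℕ∞) (fun p : (Fin 2 → ℝ) × ℝ => h ![p.1 0, p.1 1, p.2]) :=
    hh.comp contDiff_embed
  have hfd := paramFDeriv (fun p : (Fin 2 → ℝ) × ℝ => h ![p.1 0, p.1 1, p.2]) hG y
  have hch : ∀ s : ℝ, fderiv ℝ (fun z : Fin 2 → ℝ => h ![z 0, z 1, s]) y
      = (fderiv ℝ h ![y 0, y 1, s]).comp ℓe := fun s =>
    (((hh.differentiable (by simp) _).hasFDerivAt).comp y (hasFDerivAt_embed s y)).fderiv
  have hcont : Continuous (fun s : ℝ => fderiv ℝ (fun z : Fin 2 → ℝ => h ![z 0, z 1, s]) y) := by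
    have hD := contDiff_pfderiv (fun p : (Fin 2 → ℝ) × ℝ => h ![p.1 0, p.1 1, p.2]) hG
    exact hD.continuous.comp (continuous_const.prodMk continuous_id)
  have heq : fderiv ℝ (vavg h) y
      = ∫ s in (0:ℝ)..1, fderiv ℝ (fun z : Fin 2 → ℝ => h ![z 0, z 1, s]) y := hfd.fderiv
  rw [pd2, heq, intervalIntegral_clm_apply hcont]
  apply intervalIntegral.integral_congr
  intro s _
  show (fderiv ℝ (fun z : Fin 2 → ℝ => h ![z 0, z 1, s]) y) (Pi.single i 1)
      = pd3 j h ![y 0, y 1, s]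
  rw [hch s]
  simp only [ContinuousLinearMap.comp_apply, hij]
  rfl


set_option maxHeartbeats 1000000 in
/-- for smooth (x₃-periodic) solutions of the wave system
`ε ∂_t ρ + div V = 0`, `ε ∂_t V + ∇ρ + e₃×V = ε f + ε^{2(1−n)} g` on `ℝ² × 𝕋¹`,
if `curl_h⟨g^h⟩ = 0` then the quantity `γ̃ = curl_h⟨V^h⟩ − ⟨ρ⟩` satisfies
`∂_t γ̃ = curl_h⟨f^h⟩`. -/
theorem stmt15 (ε n : ℝ) (hε : ε ∈ Set.Ioc (0:ℝ) 1)
    (ρ : ℝ → (Fin 3 → ℝ) → ℝ)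
    (V f g : ℝ → (Fin 3 → ℝ) → Fin 3 → ℝ)
    (hρ : ContDiff ℝ (⊤ : ℕ∞) (fun z : ℝ × (Fin 3 → ℝ) => ρ z.1 z.2))
    (hV : ContDiff ℝ (⊤ : ℕ∞) (fun z : ℝ × (Fin 3 → ℝ) => V z.1 z.2))
    (hf : ContDiff ℝ (⊤ : ℕ∞) (fun z : ℝ × (Fin 3 → ℝ) => f z.1 z.2))
    (hg : ContDiff ℝ (⊤ : ℕ∞) (fun z : ℝ × (Fin 3 → ℝ) => g z.1 z.2))
    -- periodicity in the vertical variable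
    (hρper : ∀ t x, ρ t (x + Pi.single 2 1) = ρ t x)
    (hVper : ∀ t x, V t (x + Pi.single 2 1) = V t x)
    (hfper : ∀ t x, f t (x + Pi.single 2 1) = f t x)
    (hgper : ∀ t x, g t (x + Pi.single 2 1) = g t x)
    -- mass equation
    (hmass : ∀ t x, ε * deriv (fun τ => ρ τ x) t
      + (∑ i : Fin 3, pd3 i (fun y => V t y i) x) = 0)
    -- horizontal momentum equations (e₃ × V = (−V², V¹, 0))
    (hmom0 : ∀ t x, ε * deriv (fun τ => V τ x 0) t + pd3 0 (ρ t) x - V t x 1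
      = ε * f t x 0 + ε ^ (2 * (1 - n)) * g t x 0)
    (hmom1 : ∀ t x, ε * deriv (fun τ => V τ x 1) t + pd3 1 (ρ t) x + V t x 0
      = ε * f t x 1 + ε ^ (2 * (1 - n)) * g t x 1)
    -- vertical momentum equation
    (hmom2 : ∀ t x, ε * deriv (fun τ => V τ x 2) t + pd3 2 (ρ t) x
      = ε * f t x 2 + ε ^ (2 * (1 - n)) * g t x 2)
    -- the key structural cancellation: curl_h ⟨g^h⟩ = 0
    (hgcurl : ∀ t y, pd2 0 (vavg fun x => g t x 1) y - pd2 1 (vavg fun x => g t x 0) y = 0) :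
    ∀ t : ℝ, ∀ y : Fin 2 → ℝ,
      deriv (fun τ =>
        pd2 0 (vavg fun x => V τ x 1) y - pd2 1 (vavg fun x => V τ x 0) y
          - vavg (ρ τ) y) t
      = pd2 0 (vavg fun x => f t x 1) y - pd2 1 (vavg fun x => f t x 0) y := by
  intro t y
  obtain ⟨hεpos, -⟩ := hε
  have hε0 : ε ≠ 0 := ne_of_gt hεpos
  set c : ℝ := ε ^ (2 * (1 - n)) with hcdef
  -- component smoothness
  have hVc : ∀ j : Fin 3, ContDiff ℝ (⊤ : ℕ∞) fun z : ℝ × (Fin 3 → ℝ) => V z.1 z.2 j :=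
    fun j => contDiff_pi.mp hV j
  have hfc : ∀ j : Fin 3, ContDiff ℝ (⊤ : ℕ∞) fun z : ℝ × (Fin 3 → ℝ) => f z.1 z.2 j :=
    fun j => contDiff_pi.mp hf j
  have hgc : ∀ j : Fin 3, ContDiff ℝ (⊤ : ℕ∞) fun z : ℝ × (Fin 3 → ℝ) => g z.1 z.2 j :=
    fun j => contDiff_pi.mp hg j
  have hslice : ∀ {u : ℝ × (Fin 3 → ℝ) → ℝ}, ContDiff ℝ (⊤ : ℕ∞) u → ∀ τ : ℝ,
      ContDiff ℝ (⊤ : ℕ∞) fun x => u (τ, x) :=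
    fun hu τ => hu.comp (contDiff_const.prodMk contDiff_id)
  have hjoint : ∀ {u : ℝ × (Fin 3 → ℝ) → ℝ}, ContDiff ℝ (⊤ : ℕ∞) u → ∀ v : Fin 3 → ℝ,
      ContDiff ℝ (⊤ : ℕ∞) fun p : (Fin 3 → ℝ) × ℝ => fderiv ℝ (fun ξ => u (p.2, ξ)) p.1 v := by
    intro u hu v
    have hw : ContDiff ℝ (⊤ : ℕ∞) fun q : (Fin 3 → ℝ) × ℝ => u (q.2, q.1) :=
      hu.comp (contDiff_snd.prodMk contDiff_fst)
    exact (contDiff_pfderiv _ hw).clm_apply contDiff_const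
  -- the vertical line
  set m : ℝ → (Fin 3 → ℝ) := fun s => ![y 0, y 1, s] with hmdef
  have hms : ContDiff ℝ (⊤ : ℕ∞) m := contDiff_embed.comp (contDiff_const.prodMk contDiff_id)
  have hmc : Continuous m := hms.continuous
  -- abbreviations
  set e0 : Fin 3 → ℝ := Pi.single 0 1 with he0
  set e1 : Fin 3 → ℝ := Pi.single 1 1 with he1
  set e2 : Fin 3 → ℝ := Pi.single 2 1 with he2
  have hm' : ∀ s : ℝ, (![y 0, y 1, s] : Fin 3 → ℝ) = m s := fun _ => rfl
  -- `pd3 i (fun x => u (τ, x)) x₀` in raw form, continuity in s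
  have hconts : ∀ {u : ℝ × (Fin 3 → ℝ) → ℝ}, ContDiff ℝ (⊤ : ℕ∞) u → ∀ (v : Fin 3 → ℝ) (τ : ℝ),
      Continuous fun s : ℝ => fderiv ℝ (fun ξ => u (τ, ξ)) (m s) v := by
    intro u hu v τ
    exact (hjoint hu v).continuous.comp (hmc.prodMk continuous_const)
  -- Step A: representation of the averaged quantity as a single integral
  have hrepr : ∀ τ : ℝ,
      pd2 0 (vavg fun x => V τ x 1) y - pd2 1 (vavg fun x => V τ x 0) y - vavg (ρ τ) y
      = ∫ s in (0:ℝ)..1,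
          (fderiv ℝ (fun x => V τ x 1) (m s) e0 - fderiv ℝ (fun x => V τ x 0) (m s) e1
            - ρ τ (m s)) := by
    intro τ
    have h1 := pd2_vavg (fun x => V τ x 1) (hslice (hVc 1) τ) 0 0 ℓe_single0 y
    have h2 := pd2_vavg (fun x => V τ x 0) (hslice (hVc 0) τ) 1 1 ℓe_single1 y
    have i1 : IntervalIntegrable (fun s : ℝ => fderiv ℝ (fun x => V τ x 1) (m s) e0)
        MeasureTheory.volume 0 1 := ((hconts (hVc 1) e0 τ)).intervalIntegrable 0 1
    have i2 : IntervalIntegrable (fun s : ℝ => fderiv ℝ (fun x => V τ x 0) (m s) e1)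
        MeasureTheory.volume 0 1 := ((hconts (hVc 0) e1 τ)).intervalIntegrable 0 1
    have i3 : IntervalIntegrable (fun s : ℝ => ρ τ (m s)) MeasureTheory.volume 0 1 :=
      (((hslice hρ τ).continuous).comp hmc).intervalIntegrable 0 1
    have h3 : vavg (ρ τ) y = ∫ s in (0:ℝ)..1, ρ τ (m s) := rfl
    simp only [pd3, hm', ← he0, ← he1] at h1 h2
    rw [h1, h2, h3, ← intervalIntegral.integral_sub i1 i2,
      ← intervalIntegral.integral_sub (i1.sub i2) i3]
  set Qf : ℝ → ℝ → ℝ := fun τ s =>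
    fderiv ℝ (fun x => V τ x 1) (m s) e0 - fderiv ℝ (fun x => V τ x 0) (m s) e1
      - ρ τ (m s) with hQf
  -- Step B : differentiate under the integral sign in time
  have hQsm : ContDiff ℝ (⊤ : ℕ∞) fun p : ℝ × ℝ => Qf p.1 p.2 := by
    rw [hQf]
    apply ContDiff.sub
    apply ContDiff.sub
    · exact (hjoint (hVc 1) e0).comp ((hms.comp contDiff_snd).prodMk contDiff_fst)
    · exact (hjoint (hVc 0) e1).comp ((hms.comp contDiff_snd).prodMk contDiff_fst)
    · exact hρ.comp (contDiff_fst.prodMk (hms.comp contDiff_snd))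
  have hDQ' : HasDerivAt (fun τ => ∫ s in (0:ℝ)..1, Qf τ s)
      (∫ s in (0:ℝ)..1, deriv (fun τ => Qf τ s) t) t :=
    paramDeriv (fun p : ℝ × ℝ => Qf p.1 p.2) hQsm t
  -- Step C : compute the time derivative of the integrand using the PDEs
  have hQd : ∀ s : ℝ, deriv (fun τ => Qf τ s) t
      = (fderiv ℝ (fun x => f t x 1) (m s) e0 - fderiv ℝ (fun x => f t x 0) (m s) e1)
        + (c / ε) * (fderiv ℝ (fun x => g t x 1) (m s) e0
            - fderiv ℝ (fun x => g t x 0) (m s) e1)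
        + ε⁻¹ * fderiv ℝ (fun x => V t x 2) (m s) e2 := by
    intro s
    have hd1 : DifferentiableAt ℝ (fun τ => fderiv ℝ (fun x => V τ x 1) (m s) e0) t := by
      have h := (hjoint (hVc 1) e0).comp ((contDiff_const (c := m s)).prodMk contDiff_id)
      exact (h.differentiable (by simp)).differentiableAt
    have hd2 : DifferentiableAt ℝ (fun τ => fderiv ℝ (fun x => V τ x 0) (m s) e1) t := by
      have h := (hjoint (hVc 0) e1).comp ((contDiff_const (c := m s)).prodMk contDiff_id)
      exact (h.differentiable (by simp)).differentiableAt
    have hd3 : DifferentiableAt ℝ (fun τ => ρ τ (m s)) t := by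
      have h : ContDiff ℝ (⊤ : ℕ∞) (fun τ : ℝ => ρ τ (m s)) :=
        hρ.comp (contDiff_id.prodMk contDiff_const)
      exact (h.differentiable (by simp)).differentiableAt
    have hsplit : deriv (fun τ => Qf τ s) t
        = deriv (fun τ => fderiv ℝ (fun x => V τ x 1) (m s) e0) t
          - deriv (fun τ => fderiv ℝ (fun x => V τ x 0) (m s) e1) t
          - deriv (fun τ => ρ τ (m s)) t := by
      rw [hQf]
      rw [deriv_fun_sub (hd1.fun_sub hd2) hd3, deriv_fun_sub hd1 hd2]
    have hsw1 : deriv (fun τ => fderiv ℝ (fun x => V τ x 1) (m s) e0) t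
        = fderiv ℝ (fun ξ => deriv (fun τ => V τ ξ 1) t) (m s) e0 :=
      mixed_swap (fun z : ℝ × (Fin 3 → ℝ) => V z.1 z.2 1) (hVc 1) t (m s) e0
    have hsw2 : deriv (fun τ => fderiv ℝ (fun x => V τ x 0) (m s) e1) t
        = fderiv ℝ (fun ξ => deriv (fun τ => V τ ξ 0) t) (m s) e1 :=
      mixed_swap (fun z : ℝ × (Fin 3 → ℝ) => V z.1 z.2 0) (hVc 0) t (m s) e1
    have hPDE1 : (fun ξ => deriv (fun τ => V τ ξ 1) t)
        = fun ξ : Fin 3 → ℝ =>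
            ε⁻¹ * (ε * f t ξ 1 + c * g t ξ 1 - fderiv ℝ (ρ t) ξ e1 - V t ξ 0) := by
      funext ξ
      have h := hmom1 t ξ
      simp only [pd3, ← he1] at h
      rw [inv_mul_eq_div, eq_div_iff hε0]
      linarith
    have hPDE0 : (fun ξ => deriv (fun τ => V τ ξ 0) t)
        = fun ξ : Fin 3 → ℝ =>
            ε⁻¹ * (ε * f t ξ 0 + c * g t ξ 0 - fderiv ℝ (ρ t) ξ e0 + V t ξ 1) := by
      funext ξ
      have h := hmom0 t ξ
      simp only [pd3, ← he0] at h
      rw [inv_mul_eq_div, eq_div_iff hε0]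
      linarith
    have hPDEρ : deriv (fun τ => ρ τ (m s)) t
        = -(ε⁻¹ * (fderiv ℝ (fun x => V t x 0) (m s) e0
            + fderiv ℝ (fun x => V t x 1) (m s) e1
            + fderiv ℝ (fun x => V t x 2) (m s) e2)) := by
      have h := hmass t (m s)
      simp only [pd3, Fin.sum_univ_three, ← he0, ← he1, ← he2] at h
      have h2 : deriv (fun τ => ρ τ (m s)) t
          = (-(fderiv ℝ (fun x => V t x 0) (m s) e0
              + fderiv ℝ (fun x => V t x 1) (m s) e1
              + fderiv ℝ (fun x => V t x 2) (m s) e2)) / ε := by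
        rw [eq_div_iff hε0]
        linarith
      rw [h2]
      field_simp
    -- Fréchet derivatives of the right-hand sides
    have hfa1 : HasFDerivAt (fun ξ => f t ξ 1) (fderiv ℝ (fun ξ => f t ξ 1) (m s)) (m s) :=
      (((hslice (hfc 1) t)).differentiable (by simp) _).hasFDerivAt
    have hfa0 : HasFDerivAt (fun ξ => f t ξ 0) (fderiv ℝ (fun ξ => f t ξ 0) (m s)) (m s) :=
      (((hslice (hfc 0) t)).differentiable (by simp) _).hasFDerivAt
    have hga1 : HasFDerivAt (fun ξ => g t ξ 1) (fderiv ℝ (fun ξ => g t ξ 1) (m s)) (m s) :=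
      (((hslice (hgc 1) t)).differentiable (by simp) _).hasFDerivAt
    have hga0 : HasFDerivAt (fun ξ => g t ξ 0) (fderiv ℝ (fun ξ => g t ξ 0) (m s)) (m s) :=
      (((hslice (hgc 0) t)).differentiable (by simp) _).hasFDerivAt
    have hVa1 : HasFDerivAt (fun ξ => V t ξ 1) (fderiv ℝ (fun ξ => V t ξ 1) (m s)) (m s) :=
      (((hslice (hVc 1) t)).differentiable (by simp) _).hasFDerivAt
    have hVa0 : HasFDerivAt (fun ξ => V t ξ 0) (fderiv ℝ (fun ξ => V t ξ 0) (m s)) (m s) :=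
      (((hslice (hVc 0) t)).differentiable (by simp) _).hasFDerivAt
    have hρsm : ContDiff ℝ (⊤ : ℕ∞) (ρ t) := hslice hρ t
    have hρd : ∀ v : Fin 3 → ℝ, HasFDerivAt (fun ξ => fderiv ℝ (ρ t) ξ v)
        (fderiv ℝ (fun ξ => fderiv ℝ (ρ t) ξ v) (m s)) (m s) := by
      intro v
      have h : ContDiff ℝ (⊤ : ℕ∞) fun ξ => fderiv ℝ (ρ t) ξ v :=
        (hρsm.fderiv_right (by simp)).clm_apply contDiff_const
      exact ((h.differentiable (by simp)) _).hasFDerivAt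
    have hcomb1 : HasFDerivAt
        (fun ξ : Fin 3 → ℝ =>
          ε⁻¹ * (ε * f t ξ 1 + c * g t ξ 1 - fderiv ℝ (ρ t) ξ e1 - V t ξ 0))
        (ε⁻¹ • ((ε • fderiv ℝ (fun ξ => f t ξ 1) (m s)
          + c • fderiv ℝ (fun ξ => g t ξ 1) (m s))
          - fderiv ℝ (fun ξ => fderiv ℝ (ρ t) ξ e1) (m s)
          - fderiv ℝ (fun ξ => V t ξ 0) (m s))) (m s) :=
      ((((hfa1.const_mul ε).add (hga1.const_mul c)).sub (hρd e1)).sub hVa0).const_mul ε⁻¹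
    have hcomb0 : HasFDerivAt
        (fun ξ : Fin 3 → ℝ =>
          ε⁻¹ * (ε * f t ξ 0 + c * g t ξ 0 - fderiv ℝ (ρ t) ξ e0 + V t ξ 1))
        (ε⁻¹ • ((ε • fderiv ℝ (fun ξ => f t ξ 0) (m s)
          + c • fderiv ℝ (fun ξ => g t ξ 0) (m s))
          - fderiv ℝ (fun ξ => fderiv ℝ (ρ t) ξ e0) (m s)
          + fderiv ℝ (fun ξ => V t ξ 1) (m s))) (m s) :=
      ((((hfa0.const_mul ε).add (hga0.const_mul c)).sub (hρd e0)).add hVa1).const_mul ε⁻¹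
    have hsym := pd_swap (ρ t) hρsm (m s) e0 e1
    rw [hsplit, hsw1, hsw2, hPDE1, hPDE0, hPDEρ, hcomb1.fderiv, hcomb0.fderiv]
    simp only [ContinuousLinearMap.smul_apply, ContinuousLinearMap.add_apply,
      ContinuousLinearMap.sub_apply, smul_eq_mul]
    rw [hsym]
    field_simp
    ring
  -- Step D : integrate and use the structure hypotheses
  have if1 : IntervalIntegrable (fun s : ℝ => fderiv ℝ (fun x => f t x 1) (m s) e0)
      MeasureTheory.volume 0 1 := (hconts (hfc 1) e0 t).intervalIntegrable 0 1
  have if0 : IntervalIntegrable (fun s : ℝ => fderiv ℝ (fun x => f t x 0) (m s) e1)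
      MeasureTheory.volume 0 1 := (hconts (hfc 0) e1 t).intervalIntegrable 0 1
  have ig1 : IntervalIntegrable (fun s : ℝ => fderiv ℝ (fun x => g t x 1) (m s) e0)
      MeasureTheory.volume 0 1 := (hconts (hgc 1) e0 t).intervalIntegrable 0 1
  have ig0 : IntervalIntegrable (fun s : ℝ => fderiv ℝ (fun x => g t x 0) (m s) e1)
      MeasureTheory.volume 0 1 := (hconts (hgc 0) e1 t).intervalIntegrable 0 1
  have iV2 : IntervalIntegrable (fun s : ℝ => fderiv ℝ (fun x => V t x 2) (m s) e2)
      MeasureTheory.volume 0 1 := (hconts (hVc 2) e2 t).intervalIntegrable 0 1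
  -- the curl of the averaged g vanishes
  have hgzero : (∫ s in (0:ℝ)..1, (fderiv ℝ (fun x => g t x 1) (m s) e0
      - fderiv ℝ (fun x => g t x 0) (m s) e1)) = 0 := by
    have h1 := pd2_vavg (fun x => g t x 1) (hslice (hgc 1) t) 0 0 ℓe_single0 y
    have h2 := pd2_vavg (fun x => g t x 0) (hslice (hgc 0) t) 1 1 ℓe_single1 y
    simp only [pd3, hm', ← he0, ← he1] at h1 h2
    have h := hgcurl t y
    rw [h1, h2, ← intervalIntegral.integral_sub ig1 ig0] at h
    exact h
  -- the vertical derivative term integrates to zero by periodicity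
  have hV2zero : (∫ s in (0:ℝ)..1, fderiv ℝ (fun x => V t x 2) (m s) e2) = 0 := by
    have hline : ∀ s ∈ Set.uIcc (0:ℝ) 1, HasDerivAt (fun σ => V t (m σ) 2)
        (fderiv ℝ (fun x => V t x 2) (m s) e2) s := by
      intro s _
      have hF : HasFDerivAt (fun x => V t x 2) (fderiv ℝ (fun x => V t x 2) (m s)) (m s) :=
        ((hslice (hVc 2) t).differentiable (by simp) _).hasFDerivAt
      have hmd : HasDerivAt m e2 s := by
        have h : HasDerivAt (fun σ : ℝ => (![y 0, y 1, 0] : Fin 3 → ℝ) + σ • e2)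
            ((1:ℝ) • e2) s := ((hasDerivAt_id s).smul_const e2).const_add _
        have heq : (fun σ : ℝ => (![y 0, y 1, 0] : Fin 3 → ℝ) + σ • e2) = m := by
          funext σ
          funext i
          fin_cases i <;> simp [hmdef, he2, Pi.single_apply]
        rw [heq] at h
        simpa using h
      exact hF.comp_hasDerivAt s hmd
    have hFTC := intervalIntegral.integral_eq_sub_of_hasDerivAt hline
      (iV2.mono_set (by simp))
    rw [hFTC]
    have hper := hVper t (m 0)
    have hm01 : m 0 + e2 = m 1 := by
      funext i
      fin_cases i <;> simp [hmdef, he2, Pi.single_apply]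
    rw [hm01] at hper
    rw [congrFun hper 2]
    ring
  -- assemble everything
  have hfun : (fun τ => pd2 0 (vavg fun x => V τ x 1) y - pd2 1 (vavg fun x => V τ x 0) y
      - vavg (ρ τ) y) = fun τ => ∫ s in (0:ℝ)..1, Qf τ s := funext hrepr
  rw [hfun, hDQ'.deriv]
  have hsplitInt : (∫ s in (0:ℝ)..1, deriv (fun τ => Qf τ s) t)
      = (∫ s in (0:ℝ)..1, (fderiv ℝ (fun x => f t x 1) (m s) e0
          - fderiv ℝ (fun x => f t x 0) (m s) e1))
        + (c / ε) * (∫ s in (0:ℝ)..1, (fderiv ℝ (fun x => g t x 1) (m s) e0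
            - fderiv ℝ (fun x => g t x 0) (m s) e1))
        + ε⁻¹ * (∫ s in (0:ℝ)..1, fderiv ℝ (fun x => V t x 2) (m s) e2) := by
    rw [← intervalIntegral.integral_const_mul, ← intervalIntegral.integral_const_mul,
      ← intervalIntegral.integral_add (if1.sub if0) ((ig1.sub ig0).const_mul (c / ε)),
      ← intervalIntegral.integral_add ((if1.sub if0).add (((ig1.sub ig0).const_mul (c / ε))))
        (iV2.const_mul ε⁻¹)]
    exact intervalIntegral.integral_congr fun s _ => hQd s
  rw [hsplitInt, hgzero, hV2zero]
  -- identify the remaining integral with the curl of the averaged f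
  have hf1 := pd2_vavg (fun x => f t x 1) (hslice (hfc 1) t) 0 0 ℓe_single0 y
  have hf0 := pd2_vavg (fun x => f t x 0) (hslice (hfc 0) t) 1 1 ℓe_single1 y
  simp only [pd3, hm', ← he0, ← he1] at hf1 hf0
  rw [hf1, hf0, ← intervalIntegral.integral_sub if1 if0]
  ring
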